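/- Let l1, l2, l3, l4 be integers, each at least 2. Then the sum over all 24 permutations σ of {1,2,3,4} of the products ζ(l_{σ(1)}, l_{σ(2)}, l_{σ(3)})·ζ(l_{σ(4)}) satisfies Σ_{σ ∈ S4} ζ(l_{σ(1)}, l_{σ(2)}, l_{σ(3)})·ζ(l_{σ(4)}) = 4·ζ(l1)ζ(l2)ζ(l3)ζ(l4) − 2·Σ_{{i,j}} ζ(l_i+l_j)·ζ(l_k)·ζ(l_m) + 2·Σ_{{i,j,k}} ζ(l_i+l_j+l_k)·ζ(l_m), where the first sum on the right runs over all six 2-element subsets {i,j} of {1,2,3,4} (with {k,m} the complementary pair) and the second over the four 3-element subsets {i,j,k} (with m the remaining index). (Equation (4) of the paper's depth-4 lemma in Section 4.2, restricted to convergent indices; there the sum is indexed by C4·S3, which equals S4.) -/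

import Mathlib

/-! Summing `ζ(l_{τ 0}, …, l_{τ (n-1)})` over all permutations `τ` counts every tuple of pairwise
distinct positive integers exactly once (namely for the `τ` that sorts it decreasingly), so the
symmetric sum is the sum of `∏ i, m_i ^ (-l_i)` over injective tuples `m`. In depth three,
inclusion–exclusion over the coincidences `m_i = m_j` turns this into
`ζ(l₀)ζ(l₁)ζ(l₂) - ∑ ζ(l_i + l_j)ζ(l_k) + 2ζ(l₀ + l₁ + l₂)` (Hoffman's relation), since a sum over
tuples with prescribed coincidences factors into a product of single zeta values. Grouping the
permutations of `Fin 4` by the index that goes into the depth-one factor, the theorem is the sum of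
four instances of this relation. -/

open Classical in
/-- The multiple zeta value `ζ(l 0, l 1, …, l (n-1)) =
∑_{m 0 > m 1 > ⋯ > m (n-1) ≥ 1} ∏ i, 1 / (m i) ^ (l i)`. -/
noncomputable def mzv {n : ℕ} (l : Fin n → ℕ) : ℝ :=
  ∑' m : Fin n → ℕ,
    if StrictAnti m ∧ ∀ i, 1 ≤ m i then ∏ i, (1 : ℝ) / (m i : ℝ) ^ (l i) else 0

open Finset Function Equiv

theorem hasSum_pi_prod_of_nonneg {β : Type*} {n : ℕ} {f : Fin n → β → ℝ}
    (hf₀ : ∀ i b, 0 ≤ f i b) (hf : ∀ i, Summable (f i)) :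
    HasSum (fun u : Fin n → β => ∏ i, f i (u i)) (∏ i, ∑' b, f i b) := by
  induction n with
  | zero => simp
  | succ n ih =>
    have htail : HasSum (fun v : Fin n → β => ∏ i : Fin n, f i.succ (v i))
        (∏ i : Fin n, ∑' b, f i.succ b) :=
      ih (fun i => hf₀ i.succ) (fun i => hf i.succ)
    have htail₀ : 0 ≤ fun v : Fin n → β => ∏ i : Fin n, f i.succ (v i) := by
      intro v
      exact prod_nonneg fun i _ => hf₀ i.succ (v i)
    have hsummable := (hf 0).mul_of_nonneg htail.summable (hf₀ 0) htail₀
    have hpair := HasSum.mul (f := f 0) (g := fun v : Fin n → β => ∏ i : Fin n, f i.succ (v i))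
      (hf 0).hasSum htail hsummable
    have hcons : (fun u : Fin (n + 1) → β => ∏ i, f i (u i)) ∘ Fin.consEquiv (fun _ => β) =
        fun p => f 0 p.1 * ∏ i : Fin n, f i.succ (p.2 i) := by
      funext p
      simp [Fin.consEquiv, Fin.prod_univ_succ]
    rw [Fin.prod_univ_succ, ← (Fin.consEquiv fun _ => β).hasSum_iff, hcons]
    exact hpair

noncomputable def mzvTerm {n : ℕ} (l m : Fin n → ℕ) : ℝ :=
  ∏ i, (1 : ℝ) / (m i : ℝ) ^ l i

section mzvTerm

variable {n : ℕ} {l : Fin n → ℕ}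

lemma mzvTerm_comp_perm (l m : Fin n → ℕ) (τ : Perm (Fin n)) :
    mzvTerm (l ∘ τ) (m ∘ τ) = mzvTerm l m :=
  Equiv.prod_comp τ fun i => (1 : ℝ) / (m i : ℝ) ^ l i

lemma mzvTerm_comp {k : ℕ} (l : Fin n → ℕ) (φ : Fin n → Fin k) (u : Fin k → ℕ) :
    mzvTerm l (u ∘ φ) = mzvTerm (fun j => ∑ i with φ i = j, l i) u := by
  unfold mzvTerm
  rw [← prod_fiberwise univ φ]
  refine prod_congr rfl fun j _ => ?_
  calc ∏ i with φ i = j, (1 : ℝ) / (u (φ i) : ℝ) ^ l i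
      = ∏ i with φ i = j, (1 / (u j : ℝ)) ^ l i :=
        prod_congr rfl fun i hi => by rw [(mem_filter.mp hi).2, one_div_pow]
    _ = 1 / (u j : ℝ) ^ ∑ i with φ i = j, l i := by rw [prod_pow_eq_pow_sum, one_div_pow]

-- Since `1 / 0 ^ k = 0` for `k ≥ 1`, the condition `1 ≤ m i` in `mzv` can be dropped.
lemma mzv_eq_tsum_strictAnti (hl : ∀ i, 1 ≤ l i) :
    mzv l = ∑' m, if StrictAnti m then mzvTerm l m else 0 := by
  refine tsum_congr fun m => ?_
  by_cases hpos : ∀ i, 1 ≤ m i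
  · simp [hpos, mzvTerm]
  · obtain ⟨i, hi⟩ := not_forall.mp hpos
    have : mzvTerm l m = 0 :=
      prod_eq_zero (mem_univ i)
        (by simp [show m i = 0 by omega, zero_pow (by have := hl i; omega : l i ≠ 0)])
    simp [hpos, this]

lemma mzv_singleton {k : ℕ} (hk : 1 ≤ k) : mzv ![k] = ∑' m : ℕ, 1 / (m : ℝ) ^ k := by
  rw [mzv_eq_tsum_strictAnti (by simpa using hk), ← (Equiv.funUnique (Fin 1) ℕ).symm.tsum_eq
    (fun m => if StrictAnti m then mzvTerm ![k] m else 0)]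
  simp [Subsingleton.strictAnti, mzvTerm]

lemma hasSum_mzvTerm (hl : ∀ i, 2 ≤ l i) : HasSum (mzvTerm l) (∏ i, mzv ![l i]) := by
  have hζ : ∀ i, mzv ![l i] = ∑' m : ℕ, 1 / (m : ℝ) ^ l i :=
    fun i => mzv_singleton (by have := hl i; omega)
  simp only [hζ]
  exact hasSum_pi_prod_of_nonneg (f := fun i (m : ℕ) => 1 / (m : ℝ) ^ l i)
    (fun _ _ => by positivity) fun i => Real.summable_one_div_nat_pow.mpr (hl i)

end mzvTerm

section symmetrization

theorem existsUnique_strictAnti_comp_perm {α : Type*} [LinearOrder α] {n : ℕ} {m : Fin n → α}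
    (hm : Injective m) : ∃! τ : Perm (Fin n), StrictAnti (m ∘ τ) := by
  set σ := Tuple.sort (OrderDual.toDual ∘ m)
  have hσ : StrictAnti (m ∘ σ) :=
    (monotone_toDual_comp_iff.mp (Tuple.monotone_sort (OrderDual.toDual ∘ m))
      ).strictAnti_of_injective (hm.comp σ.injective)
  refine ⟨σ, hσ, fun τ hτ => Equiv.ext fun i =>
    hm (congrFun (?_ : OrderDual.toDual ∘ m ∘ τ = OrderDual.toDual ∘ m ∘ σ) i)⟩
  have hrange : Set.range (OrderDual.toDual ∘ m ∘ τ) = Set.range (OrderDual.toDual ∘ m ∘ σ) := by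
    simp only [← comp_assoc, EquivLike.range_comp]
  exact (StrictMono.range_inj (strictMono_toDual_comp_iff.mpr hτ)
    (strictMono_toDual_comp_iff.mpr hσ)).mp hrange

theorem sum_perm_ite_strictAnti_comp {α M : Type*} [LinearOrder α] [AddCommMonoid M] {n : ℕ}
    (m : Fin n → α) (x : M) :
    ∑ τ : Perm (Fin n), (if StrictAnti (m ∘ τ) then x else 0) = if Injective m then x else 0 := by
  by_cases hm : Injective m
  · obtain ⟨σ, hσ, huniq⟩ := existsUnique_strictAnti_comp_perm hm
    rw [if_pos hm, Fintype.sum_eq_single σ fun τ hτ => if_neg fun h => hτ (huniq τ h), if_pos hσ]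
  · rw [if_neg hm]
    exact sum_eq_zero fun τ _ =>
      if_neg fun h => hm ((Injective.of_comp_iff' m τ.bijective).mp h.injective)

variable {n : ℕ} {l : Fin n → ℕ}

lemma mzv_comp_perm (hl : ∀ i, 1 ≤ l i) (τ : Perm (Fin n)) :
    mzv (l ∘ τ) = ∑' m, if StrictAnti (m ∘ τ) then mzvTerm l m else 0 := by
  rw [mzv_eq_tsum_strictAnti (l := l ∘ τ) fun i => hl (τ i),
    ← (τ.symm.arrowCongr (Equiv.refl ℕ)).tsum_eq]
  refine tsum_congr fun m => ?_
  have hcomp : τ.symm.arrowCongr (Equiv.refl ℕ) m = m ∘ τ := rfl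
  rw [hcomp, mzvTerm_comp_perm]

theorem sum_mzv_comp_perm (hl : ∀ i, 2 ≤ l i) :
    ∑ τ : Perm (Fin n), mzv (l ∘ τ) = ∑' m : {m : Fin n → ℕ | Injective m}, mzvTerm l m := by
  have hS := (hasSum_mzvTerm hl).summable
  simp only [mzv_comp_perm fun i => one_le_two.trans (hl i)]
  rw [← Summable.tsum_finsetSum
      (f := fun (τ : Perm (Fin n)) m => if StrictAnti (m ∘ τ) then mzvTerm l m else 0)
      fun τ _ => (hS.indicator {m | StrictAnti (m ∘ τ)}).congr fun m => by
        simp [Set.indicator_apply],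
    _root_.tsum_subtype]
  refine tsum_congr fun m => ?_
  simp [sum_perm_ite_strictAnti_comp, Set.indicator_apply]

end symmetrization

section coincidences

lemma range_comp_eq_setOf {ι κ α : Type*} {φ : ι → κ} (hφ : Surjective φ) :
    Set.range (fun u : κ → α => u ∘ φ) = {m | ∀ i j, φ i = φ j → m i = m j} := by
  ext m
  constructor
  · rintro ⟨u, rfl⟩ i j h
    simp [h]
  · intro h
    exact ⟨fun j => m (surjInv hφ j), funext fun i => h _ _ (surjInv_eq hφ _)⟩

lemma hasSum_indicator_coincidence {n k : ℕ} {l : Fin n → ℕ} {φ : Fin n → Fin k}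
    {S : Set (Fin n → ℕ)} (hφ : Surjective φ) (hl : ∀ i, 2 ≤ l i)
    (hS : ∀ m, m ∈ S ↔ ∀ i j, φ i = φ j → m i = m j) :
    HasSum (S.indicator (mzvTerm l)) (∏ j, mzv ![∑ i with φ i = j, l i]) := by
  have hrange : S = Set.range fun u : Fin k → ℕ => u ∘ φ := by
    rw [range_comp_eq_setOf hφ]
    exact Set.ext hS
  have hfiber : ∀ j, 2 ≤ ∑ i with φ i = j, l i := by
    intro j
    obtain ⟨i, rfl⟩ := hφ j
    exact (hl i).trans
      (single_le_sum (fun _ _ => Nat.zero_le _) (mem_filter.mpr ⟨mem_univ i, rfl⟩))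
  refine ((hasSum_mzvTerm hl).summable.indicator S).hasSum_iff.mpr ?_
  rw [← _root_.tsum_subtype, hrange, tsum_range _ hφ.injective_comp_right]
  simp only [mzvTerm_comp]
  exact (hasSum_mzvTerm hfiber).tsum_eq

lemma injective_fin_three_iff {α : Type*} {m : Fin 3 → α} :
    Injective m ↔ m 0 ≠ m 1 ∧ m 0 ≠ m 2 ∧ m 1 ≠ m 2 := by
  refine ⟨fun h => ⟨h.ne (by decide), h.ne (by decide), h.ne (by decide)⟩, ?_⟩
  rintro ⟨h01, h02, h12⟩ i j hij
  fin_cases i <;> fin_cases j <;> simp_all [eq_comm]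

lemma indicator_injective_fin_three {α M : Type*} [AddCommGroup M] (f : (Fin 3 → α) → M) :
    {m | Injective m}.indicator f = f - {m | m 0 = m 1}.indicator f
      - {m | m 0 = m 2}.indicator f - {m | m 1 = m 2}.indicator f
      + (2 : ℕ) • {m | m 0 = m 1 ∧ m 1 = m 2}.indicator f := by
  funext m
  by_cases h01 : m 0 = m 1 <;> by_cases h02 : m 0 = m 2 <;> by_cases h12 : m 1 = m 2 <;>
    simp_all [injective_fin_three_iff, two_nsmul]

theorem sum_mzv_comp_perm_fin_three {l : Fin 3 → ℕ} (hl : ∀ i, 2 ≤ l i) :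
    ∑ τ : Perm (Fin 3), mzv (l ∘ τ) =
      mzv ![l 0] * mzv ![l 1] * mzv ![l 2] - mzv ![l 0 + l 1] * mzv ![l 2]
        - mzv ![l 0 + l 2] * mzv ![l 1] - mzv ![l 1 + l 2] * mzv ![l 0]
        + 2 * mzv ![l 0 + l 1 + l 2] := by
  have h01 := hasSum_indicator_coincidence (k := 2) (φ := ![0, 0, 1]) (S := {m | m 0 = m 1})
    (by decide) hl fun m => by simp [Fin.forall_fin_succ]; grind
  have h02 := hasSum_indicator_coincidence (k := 2) (φ := ![0, 1, 0]) (S := {m | m 0 = m 2})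
    (by decide) hl fun m => by simp [Fin.forall_fin_succ]; grind
  have h12 := hasSum_indicator_coincidence (k := 2) (φ := ![1, 0, 0]) (S := {m | m 1 = m 2})
    (by decide) hl fun m => by simp [Fin.forall_fin_succ]; grind
  have h012 := hasSum_indicator_coincidence (k := 1) (φ := ![0, 0, 0])
    (S := {m | m 0 = m 1 ∧ m 1 = m 2}) (by decide) hl fun m => by simp [Fin.forall_fin_succ]; grind
  rw [sum_mzv_comp_perm hl, _root_.tsum_subtype, indicator_injective_fin_three]
  refine ((((((hasSum_mzvTerm hl).sub h01).sub h02).sub h12).add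
    (h012.const_smul 2)).tsum_eq).trans ?_
  simp [Fin.prod_univ_three, Fin.prod_univ_two, sum_filter, Fin.sum_univ_three]

end coincidences

theorem sum_perm_fin_succ {M : Type*} [AddCommMonoid M] {n : ℕ}
    (g : (Fin n → Fin (n + 1)) → Fin (n + 1) → M) :
    ∑ σ : Perm (Fin (n + 1)), g (σ ∘ Fin.castSucc) (σ (Fin.last n)) =
      ∑ p, ∑ τ : Perm (Fin n), g (swap 0 p ∘ Fin.succ ∘ τ) p := by
  rw [← Equiv.sum_comp (Equiv.mulRight (finRotate (n + 1))), ← Perm.decomposeFin.symm.sum_comp,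
    Fintype.sum_prod_type]
  refine sum_congr rfl fun p _ => sum_congr rfl fun τ _ => ?_
  have hcast (i : Fin n) : finRotate (n + 1) i.castSucc = i.succ := by simp
  congr 1
  · funext i
    simp [hcast, Perm.decomposeFin_symm_apply_succ]
  · simp

theorem symmetric_sum_depth_three_times_depth_one (l1 l2 l3 l4 : ℕ)
    (h1 : 2 ≤ l1) (h2 : 2 ≤ l2) (h3 : 2 ≤ l3) (h4 : 2 ≤ l4) :
    (∑ σ : Equiv.Perm (Fin 4),
        mzv ![![l1, l2, l3, l4] (σ 0), ![l1, l2, l3, l4] (σ 1),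
              ![l1, l2, l3, l4] (σ 2)]
          * mzv ![![l1, l2, l3, l4] (σ 3)]) =
      4 * (mzv ![l1] * mzv ![l2] * mzv ![l3] * mzv ![l4])
        - 2 * (mzv ![l1 + l2] * mzv ![l3] * mzv ![l4]
            + mzv ![l1 + l3] * mzv ![l2] * mzv ![l4]
            + mzv ![l1 + l4] * mzv ![l2] * mzv ![l3]
            + mzv ![l2 + l3] * mzv ![l1] * mzv ![l4]
            + mzv ![l2 + l4] * mzv ![l1] * mzv ![l3]
            + mzv ![l3 + l4] * mzv ![l1] * mzv ![l2])
        + 2 * (mzv ![l1 + l2 + l3] * mzv ![l4] + mzv ![l1 + l2 + l4] * mzv ![l3]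
            + mzv ![l1 + l3 + l4] * mzv ![l2] + mzv ![l2 + l3 + l4] * mzv ![l1]) := by
  set L : Fin 4 → ℕ := ![l1, l2, l3, l4] with hL_def
  have hL : ∀ i, 2 ≤ L i := by
    intro i
    fin_cases i <;> assumption
  have hvec (σ : Perm (Fin 4)) : ![L (σ 0), L (σ 1), L (σ 2)] = L ∘ σ ∘ Fin.castSucc := by
    funext i
    fin_cases i <;> rfl
  calc _ = ∑ σ : Perm (Fin 4), mzv (L ∘ σ ∘ Fin.castSucc) * mzv ![L (σ (Fin.last 3))] :=
        sum_congr rfl fun σ _ => by rw [hvec]; rfl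
    _ = ∑ p, mzv ![L p] * ∑ τ : Perm (Fin 3), mzv ((L ∘ swap 0 p ∘ Fin.succ) ∘ τ) := by
        rw [sum_perm_fin_succ (fun v p => mzv (L ∘ v) * mzv ![L p])]
        simp only [mul_sum, mul_comm]
        rfl
    _ = _ := by
        simp only [fun p : Fin 4 =>
          sum_mzv_comp_perm_fin_three (l := L ∘ swap 0 p ∘ Fin.succ) fun i => hL _]
        simp [Fin.sum_univ_four, swap_apply_def, hL_def]
        -- `ring_nf` also normalises the weights `l_i + l_j` inside `mzv ![_]`.
        ring_nf
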